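/- (Two-variable Poisson formula) Let z₀, w₀ ∈ ℂ, let R > 0, and let h be a real-valued continuous function on the closed bidisc {|z − z₀| ≤ R} × {|w − w₀| ≤ R} such that on the open bidisc h is harmonic in z for each fixed w and harmonic in w for each fixed z. Then for every 0 < r ≤ R and every (z,w) with |z − z₀| < r and |w − w₀| < r, h(z,w) = (1/(2π)²) ∫₀^{2π} ∫₀^{2π} h(z₀ + re^{it}, w₀ + re^{is}) · Re((re^{it} + (z − z₀))/(re^{it} − (z − z₀))) · Re((re^{is} + (w − w₀))/(re^{is} − (w − w₀))) dt ds. -/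

import Mathlib

/-! Every slice of `h` is harmonic, so the one-variable Poisson formula applies in `w` on the
circle of radius `r`, and in `z` for every second argument inside the open disc. Both sides of
the `z`-formula depend continuously on the second argument over the closed disc (the integrand is
uniformly continuous on a compact set), so the formula persists on the boundary circle; substituting
it into the `w`-formula gives the iterated Poisson integral, also when `r = R`. -/

open Complex Metric

/-- A real-valued function on an open subset of `ℂ` is harmonic there if it is twice
continuously differentiable and satisfies Laplace's equation
`∂²u/∂x² + ∂²u/∂y² = 0` (directions `1` and `i`). -/
def HarmonicOnC (u : ℂ → ℝ) (U : Set ℂ) : Prop :=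
  ContDiffOn ℝ 2 u U ∧ ∀ z ∈ U,
    fderiv ℝ (fun y => fderiv ℝ u y 1) z 1 +
      fderiv ℝ (fun y => fderiv ℝ u y Complex.I) z Complex.I = 0

open InnerProductSpace Laplacian Real Set

theorem fderiv_fderiv_apply_const {E F : Type*} [NormedAddCommGroup E] [NormedSpace ℝ E]
    [NormedAddCommGroup F] [NormedSpace ℝ F] {f : E → F} {x : E}
    (hf : DifferentiableAt ℝ (fderiv ℝ f) x) (v w : E) :
    fderiv ℝ (fun y => fderiv ℝ f y v) x w = fderiv ℝ (fderiv ℝ f) x w v := by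
  simp [fderiv_clm_apply hf (differentiableAt_const v)]

theorem HarmonicOnC.harmonicOnNhd {u : ℂ → ℝ} {U : Set ℂ} (hU : IsOpen U)
    (hu : HarmonicOnC u U) : HarmonicOnNhd u U := by
  have hC2 : ∀ z ∈ U, ContDiffAt ℝ 2 u z := fun z hz => hu.1.contDiffAt (hU.mem_nhds hz)
  refine fun z hz => ⟨hC2 z hz, ?_⟩
  filter_upwards [hU.mem_nhds hz] with y hy
  have hd : DifferentiableAt ℝ (fderiv ℝ u) y :=
    ((hC2 y hy).fderiv_right (m := 1) le_rfl).differentiableAt one_ne_zero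
  simpa [laplacian_eq_iteratedFDeriv_complexPlane, iteratedFDeriv_two_apply,
    fderiv_fderiv_apply_const hd] using hu.2 y hy

theorem continuousOn_re_herglotzRieszKernel {c z : ℂ} {r : ℝ} (hz : z ∈ ball c r) :
    ContinuousOn (re ∘ herglotzRieszKernel c z) (sphere c r) := by
  have hne : ∀ ζ ∈ sphere c r, ζ - c - (z - c) ≠ 0 := fun ζ hζ h => by
    rw [sub_sub_sub_cancel_right, sub_eq_zero] at h
    rw [mem_sphere, h] at hζ
    exact (mem_ball.1 hz).ne hζ
  rw [herglotzRieszKernel_fun_def]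
  fun_prop (disch := assumption)

theorem continuousOn_parametric_circleAverage {X E : Type*} [TopologicalSpace X]
    [NormedAddCommGroup E] [NormedSpace ℝ E] {f : X → ℂ → E} {s : Set X} {c : ℂ} {r : ℝ}
    (hf : ContinuousOn (fun p : X × ℂ => f p.1 p.2) (s ×ˢ sphere c |r|)) :
    ContinuousOn (fun x => circleAverage (f x) c r) s := by
  rw [continuousOn_iff_continuous_domRestrict] at *
  apply (intervalIntegral.continuous_parametric_intervalIntegral_of_continuous' _ _ _).const_smul
  exact hf.comp (f := fun p : s × ℝ => ⟨(p.1.1, circleMap c r p.2),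
    mk_mem_prod p.1.2 (circleMap_mem_sphere' c r p.2)⟩) (by fun_prop)

theorem circleAverage_re_herglotzRieszKernel_smul_of_mem_closure {X : Type*} [TopologicalSpace X]
    {h : ℂ → X → ℝ} {S : Set X} {c z : ℂ} {r : ℝ}
    (hcont : ContinuousOn (fun p : ℂ × X => h p.1 p.2) (closedBall c r ×ˢ closure S))
    (hharm : ∀ w ∈ S, HarmonicOnNhd (h · w) (ball c r)) (hz : z ∈ ball c r)
    {w : X} (hw : w ∈ closure S) :
    circleAverage ((re ∘ herglotzRieszKernel c z) • (h · w)) c r = h z w := by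
  have hr : 0 < r := pos_of_mem_ball hz
  refine EqOn.of_subset_closure
    (f := fun w => circleAverage ((re ∘ herglotzRieszKernel c z) • (h · w)) c r)
    (g := h z) (fun w hw => ?_) ?_ ?_ subset_closure subset_rfl hw
  · refine HarmonicContOnCl.circleAverage_re_herglotzRieszKernel_smul ⟨hharm w hw, ?_⟩ hz
    rw [closure_ball c hr.ne']
    exact hcont.comp (by fun_prop) fun ζ hζ => mk_mem_prod hζ (subset_closure hw)
  · refine continuousOn_parametric_circleAverage ?_
    rw [abs_of_pos hr]
    refine ((continuousOn_re_herglotzRieszKernel hz).comp continuousOn_snd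
      fun p hp => hp.2).smul (hcont.comp continuous_swap.continuousOn fun p hp => ?_)
    exact mk_mem_prod (sphere_subset_closedBall hp.2) hp.1
  · exact hcont.comp (by fun_prop) fun w hw => mk_mem_prod (ball_subset_closedBall hz) hw

theorem circleAverage_re_herglotzRieszKernel_smul_of_bidisc {h : ℂ → ℂ → ℝ} {z₀ w₀ z w : ℂ}
    {R r : ℝ} (hR : 0 < R)
    (hcont : ContinuousOn (fun p : ℂ × ℂ => h p.1 p.2) (closedBall z₀ R ×ˢ closedBall w₀ R))
    (hharm : ∀ w ∈ ball w₀ R, HarmonicOnC (h · w) (ball z₀ R)) (hrR : r ≤ R)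
    (hz : z ∈ ball z₀ r) (hw : w ∈ closedBall w₀ R) :
    circleAverage ((re ∘ herglotzRieszKernel z₀ z) • (h · w)) z₀ r = h z w := by
  rw [← closure_ball w₀ hR.ne'] at hcont hw
  exact circleAverage_re_herglotzRieszKernel_smul_of_mem_closure
    (hcont.mono (prod_mono_left (closedBall_subset_closedBall hrR)))
    (fun w hw => ((hharm w hw).harmonicOnNhd isOpen_ball).mono (ball_subset_ball hrR)) hz hw

theorem circleAverage_smul_circleAverage_smul (F : ℂ → ℂ → ℝ) (P Q : ℂ → ℝ) (c d : ℂ)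
    (r ρ : ℝ) :
    circleAverage (Q • fun ζ' => circleAverage (P • (F · ζ')) c r) d ρ =
      1 / (2 * π) ^ 2 * ∫ s in 0..2 * π, ∫ t in 0..2 * π,
        F (circleMap c r t) (circleMap d ρ s) * P (circleMap c r t) * Q (circleMap d ρ s) := by
  simp only [circleAverage_def, smul_eq_mul, Pi.mul_apply, ← intervalIntegral.integral_const_mul]
  congr 1 with s
  congr 1 with t
  ring

theorem re_herglotzRieszKernel_circleMap (c z : ℂ) (r t : ℝ) :
    (herglotzRieszKernel c z (circleMap c r t)).re =
      ((r * exp (t * I) + (z - c)) / (r * exp (t * I) - (z - c))).re := by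
  simp [herglotzRieszKernel_def, circleMap]

/-- two-variable Poisson formula: a function continuous on a closed bidisc
and separately harmonic on the open bidisc is reproduced by the product of Poisson
kernels on any smaller bicircle. -/
theorem poisson_formula_two_variables
    (z₀ w₀ : ℂ) (R : ℝ) (hR : 0 < R) (h : ℂ → ℂ → ℝ)
    (hcont : ContinuousOn (fun p : ℂ × ℂ => h p.1 p.2)
      (closedBall z₀ R ×ˢ closedBall w₀ R))
    (hharm₁ : ∀ w ∈ ball w₀ R, HarmonicOnC (fun z => h z w) (ball z₀ R))
    (hharm₂ : ∀ z ∈ ball z₀ R, HarmonicOnC (fun w => h z w) (ball w₀ R)) :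
    ∀ r : ℝ, 0 < r → r ≤ R → ∀ z w : ℂ,
      ‖z - z₀‖ < r → ‖w - w₀‖ < r →
      h z w = (1 / (2 * Real.pi) ^ 2) *
        ∫ s in (0 : ℝ)..(2 * Real.pi), ∫ t in (0 : ℝ)..(2 * Real.pi),
          h (z₀ + r * Complex.exp (t * Complex.I)) (w₀ + r * Complex.exp (s * Complex.I)) *
            ((r * Complex.exp (t * Complex.I) + (z - z₀)) /
              (r * Complex.exp (t * Complex.I) - (z - z₀))).re *
            ((r * Complex.exp (s * Complex.I) + (w - w₀)) /
              (r * Complex.exp (s * Complex.I) - (w - w₀))).re := by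
  intro r hr hrR z w hz hw
  rw [← mem_ball_iff_norm] at hz hw
  have hcont_swap : ContinuousOn (fun p : ℂ × ℂ => h p.2 p.1)
      (closedBall w₀ R ×ˢ closedBall z₀ R) :=
    hcont.comp continuous_swap.continuousOn fun p hp => ⟨hp.2, hp.1⟩
  have h_outer := circleAverage_re_herglotzRieszKernel_smul_of_bidisc hR hcont_swap hharm₂ hrR hw
    (ball_subset_closedBall (ball_subset_ball hrR hz))
  have h_inner : EqOn ((re ∘ herglotzRieszKernel w₀ w) • (h z ·))
      ((re ∘ herglotzRieszKernel w₀ w) • fun ζ =>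
        circleAverage ((re ∘ herglotzRieszKernel z₀ z) • (h · ζ)) z₀ r) (sphere w₀ |r|) :=
    fun ζ hζ => by
      rw [abs_of_pos hr] at hζ
      simp only [Pi.smul_apply', circleAverage_re_herglotzRieszKernel_smul_of_bidisc hR hcont
        hharm₁ hrR hz (closedBall_subset_closedBall hrR (sphere_subset_closedBall hζ))]
  rw [← h_outer, circleAverage_congr_sphere h_inner, circleAverage_smul_circleAverage_smul]
  simp only [Function.comp_apply, re_herglotzRieszKernel_circleMap]
  rfl
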